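/- Fix a real number q with 0 < q < 1. Let H = ℓ²(ℕ × ℤ) with standard orthonormal basis (e_{m,n}), let b be the bounded operator determined by b e_{m,n} = q^m e_{m,n+1}, let F be the bounded operator determined by F e_{m,n} = sign(n) e_{m,n} (with sign(n) = 1 for n ≥ 0 and −1 for n < 0), and set f = F·b − b·F. Then for every k ∈ ℕ: b*·f·(f*f)^k e_{m,−1} = 2^{2k+1} q^{2(k+1)m} e_{m,−1} and b*·f·(f*f)^k e_{m,n} = 0 for n ≠ −1; and b·f*·(ff*)^k e_{m,0} = 2^{2k+1} q^{2(k+1)m} e_{m,0} and b·f*·(ff*)^k e_{m,n} = 0 for n ≠ 0. -/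
import Mathlib


noncomputable section

/-- The Hilbert space `ℓ²(ℕ × ℤ)`. -/
abbrev ellTwo : Type := lp (fun _ : ℕ × ℤ => ℂ) 2

/-- The standard orthonormal basis vector `e_{m,n}` of `ℓ²(ℕ × ℤ)`. -/
def basisVec (m : ℕ) (n : ℤ) : ellTwo := lp.single 2 (m, n) 1

open scoped InnerProductSpace

lemma basisVec_apply (a : ℕ) (c : ℤ) (p : ℕ × ℤ) :
    (basisVec a c) p = if p = (a, c) then 1 else 0 := by
  rw [basisVec, lp.single_apply]
  split_ifs with h <;> simp [h]

lemma star_apply_coord (T : ellTwo →L[ℂ] ellTwo) (v : ellTwo) (p : ℕ × ℤ) :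
    ((star T) v) p = ⟪T (lp.single 2 p 1), v⟫_ℂ := by
  rw [ContinuousLinearMap.star_eq_adjoint]
  have h := ContinuousLinearMap.adjoint_inner_right T (lp.single 2 p 1) v
  rw [lp.inner_single_left] at h
  simpa [RCLike.inner_apply] using h

lemma inner_basis (a : ℕ) (c : ℤ) (v : ellTwo) :
    ⟪(basisVec a c : ellTwo), v⟫_ℂ = v (a, c) := by
  rw [basisVec, lp.inner_single_left]
  simp [RCLike.inner_apply]

/-- With `b e_{m,n} = q^m e_{m,n+1}`, `F e_{m,n} = sign(n) e_{m,n}`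
and `f = Fb − bF`, for every `k ∈ ℕ` one has
`b* f (f*f)^k e_{m,−1} = 2^{2k+1} q^{2(k+1)m} e_{m,−1}` and `= 0` on `e_{m,n}`, `n ≠ −1`;
and `b f* (ff*)^k e_{m,0} = 2^{2k+1} q^{2(k+1)m} e_{m,0}` and `= 0` on `e_{m,n}`,
`n ≠ 0`. -/
theorem fredholm_module_trace_terms (q : ℝ) (hq0 : 0 < q) (hq1 : q < 1)
    (b F : ellTwo →L[ℂ] ellTwo)
    (hb : ∀ (m : ℕ) (n : ℤ),
      b (basisVec m n) = ((q ^ m : ℝ) : ℂ) • basisVec m (n + 1))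
    (hF : ∀ (m : ℕ) (n : ℤ),
      F (basisVec m n) = if 0 ≤ n then basisVec m n else -basisVec m n) :
    ∀ k : ℕ,
      (∀ m : ℕ,
        (star b * ((F * b - b * F) *
            (star (F * b - b * F) * (F * b - b * F)) ^ k)) (basisVec m (-1)) =
          ((2 ^ (2 * k + 1) * q ^ (2 * (k + 1) * m) : ℝ) : ℂ) • basisVec m (-1)) ∧
      (∀ (m : ℕ) (n : ℤ), n ≠ -1 →
        (star b * ((F * b - b * F) *
            (star (F * b - b * F) * (F * b - b * F)) ^ k)) (basisVec m n) = 0) ∧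
      (∀ m : ℕ,
        (b * (star (F * b - b * F) *
            ((F * b - b * F) * star (F * b - b * F)) ^ k)) (basisVec m 0) =
          ((2 ^ (2 * k + 1) * q ^ (2 * (k + 1) * m) : ℝ) : ℂ) • basisVec m 0) ∧
      (∀ (m : ℕ) (n : ℤ), n ≠ 0 →
        (b * (star (F * b - b * F) *
            ((F * b - b * F) * star (F * b - b * F)) ^ k)) (basisVec m n) = 0) := by
  have hf : ∀ (m : ℕ) (n : ℤ), (F * b - b * F) (basisVec m n)
      = if n = -1 then ((2 * q ^ m : ℝ) : ℂ) • basisVec m 0 else 0 := by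
    intro m n
    rw [ContinuousLinearMap.sub_apply, ContinuousLinearMap.mul_apply,
      ContinuousLinearMap.mul_apply]
    by_cases h : n = -1
    · subst h
      have t1 : F (b (basisVec m (-1))) = ((q ^ m : ℝ) : ℂ) • basisVec m 0 := by
        rw [hb, map_smul, show (-1 : ℤ) + 1 = 0 from rfl, hF, if_pos le_rfl]
      have t2 : b (F (basisVec m (-1))) = -(((q ^ m : ℝ) : ℂ) • basisVec m 0) := by
        rw [hF, if_neg (by norm_num), map_neg, hb, show (-1 : ℤ) + 1 = 0 from rfl]
      rw [t1, t2, if_pos rfl]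
      push_cast
      module
    · rw [if_neg h]
      by_cases h2 : 0 ≤ n
      · have t1 : F (b (basisVec m n)) = ((q ^ m : ℝ) : ℂ) • basisVec m (n + 1) := by
          rw [hb, map_smul, hF, if_pos (by omega)]
        have t2 : b (F (basisVec m n)) = ((q ^ m : ℝ) : ℂ) • basisVec m (n + 1) := by
          rw [hF, if_pos h2, hb]
        rw [t1, t2, sub_self]
      · have t1 : F (b (basisVec m n)) = -(((q ^ m : ℝ) : ℂ) • basisVec m (n + 1)) := by
          rw [hb, map_smul, hF, if_neg (by omega), smul_neg]
        have t2 : b (F (basisVec m n)) = -(((q ^ m : ℝ) : ℂ) • basisVec m (n + 1)) := by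
          rw [hF, if_neg h2, map_neg, hb]
        rw [t1, t2, sub_self]
  have hsb : ∀ (m : ℕ) (n : ℤ), (star b) (basisVec m n)
      = ((q ^ m : ℝ) : ℂ) • basisVec m (n - 1) := by
    intro m n
    apply lp.ext; funext p; obtain ⟨a, c⟩ := p
    rw [star_apply_coord, show (lp.single 2 (a, c) (1 : ℂ) : ellTwo) = basisVec a c from rfl,
      hb, inner_smul_left, inner_basis, basisVec_apply, lp.coeFn_smul, Pi.smul_apply,
      basisVec_apply]
    by_cases hac : (a, c) = (m, n - 1)
    · rw [if_pos (by simp [Prod.ext_iff] at hac ⊢; omega), if_pos hac]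
      obtain ⟨rfl, rfl⟩ : a = m ∧ c = n - 1 := by simpa [Prod.ext_iff] using hac
      simp [Complex.conj_ofReal]
    · rw [if_neg (by simp [Prod.ext_iff] at hac ⊢; omega), if_neg hac]
      simp
  have hsf : ∀ (m : ℕ) (n : ℤ), (star (F * b - b * F)) (basisVec m n)
      = if n = 0 then ((2 * q ^ m : ℝ) : ℂ) • basisVec m (-1) else 0 := by
    intro m n
    apply lp.ext; funext p; obtain ⟨a, c⟩ := p
    rw [star_apply_coord, show (lp.single 2 (a, c) (1 : ℂ) : ellTwo) = basisVec a c from rfl,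
      hf]
    by_cases hc : c = -1
    · rw [if_pos hc, inner_smul_left, inner_basis, basisVec_apply]
      by_cases hn : n = 0
      · subst hn; subst hc
        rw [if_pos rfl, lp.coeFn_smul, Pi.smul_apply, basisVec_apply]
        by_cases ham : a = m
        · subst ham
          rw [if_pos rfl, if_pos rfl, Complex.conj_ofReal, smul_eq_mul]
        · rw [if_neg (by simp [Prod.ext_iff, ham]), if_neg (by simp [Prod.ext_iff, ham])]
          simp
      · rw [if_neg (by simp [Prod.ext_iff]; omega), if_neg hn]
        simp
    · rw [if_neg hc, inner_zero_left]
      by_cases hn : n = 0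
      · rw [if_pos hn, lp.coeFn_smul, Pi.smul_apply, basisVec_apply,
          if_neg (by simp [Prod.ext_iff]; omega), smul_zero]
      · rw [if_neg hn]
        simp
  have hpow1 : ∀ (k : ℕ) (m : ℕ),
      ((star (F * b - b * F) * (F * b - b * F)) ^ k) (basisVec m (-1))
        = (((2 * q ^ m) ^ (2 * k) : ℝ) : ℂ) • basisVec m (-1) := by
    intro k m
    induction k with
    | zero =>
        rw [pow_zero, ContinuousLinearMap.one_apply, Nat.mul_zero, pow_zero,
          Complex.ofReal_one, one_smul]
    | succ k ih =>
        rw [pow_succ, ContinuousLinearMap.mul_apply, ContinuousLinearMap.mul_apply,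
          hf, if_pos rfl, map_smul, hsf, if_pos rfl, map_smul, map_smul, ih,
          smul_smul, smul_smul]
        congr 1
        push_cast
        ring
  have hpow2 : ∀ (k : ℕ) (m : ℕ),
      (((F * b - b * F) * star (F * b - b * F)) ^ k) (basisVec m 0)
        = (((2 * q ^ m) ^ (2 * k) : ℝ) : ℂ) • basisVec m 0 := by
    intro k m
    induction k with
    | zero =>
        rw [pow_zero, ContinuousLinearMap.one_apply, Nat.mul_zero, pow_zero,
          Complex.ofReal_one, one_smul]
    | succ k ih =>
        rw [pow_succ, ContinuousLinearMap.mul_apply, ContinuousLinearMap.mul_apply,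
          hsf, if_pos rfl, map_smul, hf, if_pos rfl, map_smul, map_smul, ih,
          smul_smul, smul_smul]
        congr 1
        push_cast
        ring
  intro k
  refine ⟨fun m => ?_, fun m n hn => ?_, fun m => ?_, fun m n hn => ?_⟩
  · rw [ContinuousLinearMap.mul_apply, ContinuousLinearMap.mul_apply, hpow1, map_smul,
      hf, if_pos rfl, map_smul, map_smul, hsb, show (0 : ℤ) - 1 = -1 from rfl,
      smul_smul, smul_smul]
    congr 1
    push_cast
    ring
  · rw [ContinuousLinearMap.mul_apply, ContinuousLinearMap.mul_apply]
    cases k with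
    | zero =>
        rw [pow_zero, ContinuousLinearMap.one_apply, hf, if_neg hn, map_zero]
    | succ k =>
        rw [pow_succ, ContinuousLinearMap.mul_apply, ContinuousLinearMap.mul_apply,
          hf, if_neg hn, map_zero, map_zero, map_zero, map_zero]
  · rw [ContinuousLinearMap.mul_apply, ContinuousLinearMap.mul_apply, hpow2, map_smul,
      hsf, if_pos rfl, map_smul, map_smul, hb, show (-1 : ℤ) + 1 = 0 from rfl,
      smul_smul, smul_smul]
    congr 1
    push_cast
    ring
  · rw [ContinuousLinearMap.mul_apply, ContinuousLinearMap.mul_apply]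
    cases k with
    | zero =>
        rw [pow_zero, ContinuousLinearMap.one_apply, hsf, if_neg hn, map_zero]
    | succ k =>
        rw [pow_succ, ContinuousLinearMap.mul_apply, ContinuousLinearMap.mul_apply,
          hsf, if_neg hn, map_zero, map_zero, map_zero, map_zero]
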